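/- Let H = (H0, H1) be a consistent partial condition over a nonempty finite set T in which every member of H0 ∪ H1 is nonempty. If there exist P1, …, Pk ∈ H0 and N1, …, Nl ∈ H1 (with k, l ≥ 1) such that P1 ∪ ⋯ ∪ Pk = N1 ∪ ⋯ ∪ Nl, then there exists no parity condition κ : T → ℕ that is consistent with H. -/
import Mathlib

/-- Helper: for a nonempty family of nonempty sets, some member attains the
infimum of `κ` over the union. -/
lemma exists_member_sInf_eq {T : Type*} (κ : T → ℕ) (F : Set (Set T))
    (hF : F.Nonempty) (hne : ∀ X ∈ F, X.Nonempty) :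
    ∃ X ∈ F, sInf (κ '' X) = sInf (κ '' ⋃₀ F) := by
  have hUne : (κ '' ⋃₀ F).Nonempty := by
    obtain ⟨X, hX⟩ := hF
    obtain ⟨t, ht⟩ := hne X hX
    exact ⟨κ t, ⟨t, ⟨X, hX, ht⟩, rfl⟩⟩
  obtain ⟨t, ⟨X, hX, htX⟩, htm⟩ := Nat.sInf_mem hUne
  refine ⟨X, hX, le_antisymm ?_ ?_⟩
  · calc sInf (κ '' X) ≤ κ t := Nat.sInf_le ⟨t, htX, rfl⟩
      _ = _ := htm
  · have h1 : sInf (κ '' X) ∈ κ '' X := Nat.sInf_mem ⟨κ t, ⟨t, htX, rfl⟩⟩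
    obtain ⟨s, hs, hseq⟩ := h1
    rw [← hseq]
    exact Nat.sInf_le ⟨s, ⟨X, hX, hs⟩, rfl⟩

/-- If some union of sets from `H0` coincides with some union of
sets from `H1` (both unions over nonempty subfamilies), then no parity
condition `κ : T → ℕ` is consistent with the consistent partial condition
`(H0, H1)` all of whose members are nonempty.  A nonempty set `X` satisfies a
parity condition `κ` iff `min κ(X)` is even. -/
theorem parity_nonexistence {T : Type*} [Fintype T] [Nonempty T]
    (H0 H1 : Set (Set T)) (hcons : H0 ∩ H1 = ∅)
    (hne : ∀ X ∈ H0 ∪ H1, X.Nonempty)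
    (P N : Set (Set T)) (hP : P ⊆ H0) (hN : N ⊆ H1)
    (hPne : P.Nonempty) (hNne : N.Nonempty) (heq : ⋃₀ P = ⋃₀ N) :
    ¬∃ κ : T → ℕ,
      (∀ X ∈ H0, Even (sInf (κ '' X))) ∧ ∀ X ∈ H1, ¬Even (sInf (κ '' X)) := by
  rintro ⟨κ, h0, h1⟩
  obtain ⟨X, hXP, hXeq⟩ := exists_member_sInf_eq κ P hPne
    (fun X hX => hne X (Or.inl (hP hX)))
  obtain ⟨Y, hYN, hYeq⟩ := exists_member_sInf_eq κ N hNne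
    (fun X hX => hne X (Or.inr (hN hX)))
  have hXeven := h0 X (hP hXP)
  have hYodd := h1 Y (hN hYN)
  rw [hXeq, heq, ← hYeq] at hXeven
  exact hYodd hXeven
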